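/- arXiv:quant-ph/0202084 — 4 statements merged into one kernel-verified Lean document; each statement's English description precedes it below -/
import Mathlib

section
/- The quantity H(τ, ξ) := (1/2)·erf(ξ/Δ(τ)), with Δ(τ) = δ·√(1 + (τ/δ²)²), is constant along each flow line: H(Fλ(p⁰, p¹)) = H(p⁰, p¹) for all λ and all (p⁰, p¹) ∈ ℝ². -/
noncomputable def erf (x : ℝ) : ℝ :=
  (2 / Real.sqrt Real.pi) * ∫ z in (0:ℝ)..x, Real.exp (-z^2)

theorem H_constant_along_flow (δ : ℝ) (hδ : 0 < δ)
    (Δ : ℝ → ℝ) (hΔ : ∀ τ, Δ τ = δ * Real.sqrt (1 + (τ / δ^2)^2))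
    (H : ℝ × ℝ → ℝ) (hH : ∀ p : ℝ × ℝ, H p = (1/2) * erf (p.2 / Δ p.1))
    (F : ℝ → ℝ × ℝ → ℝ × ℝ)
    (hF : ∀ lam p, F lam p = (p.1 + lam, p.2 * Δ (p.1 + lam) / Δ p.1)) :
    ∀ (lam : ℝ) (p : ℝ × ℝ), H (F lam p) = H p := by
  have hpos : ∀ τ, 0 < Δ τ := by
    intro τ
    rw [hΔ]
    have : (0:ℝ) < 1 + (τ / δ^2)^2 := by positivity
    positivity
  intro lam p
  rw [hH, hH, hF]
  congr 1
  have h1 := (hpos (p.1 + lam)).ne'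
  have h2 := (hpos p.1).ne'
  congr 1
  field_simp
end

section
/- For the free Gaussian wave packet with δ > 0, detector position L > 0, and activation time T_A < 0, the Bohmian detection probability P[D_T] given piecewise by (1/2)(erf(λ/√(1+t²)) − erf(λ/√(1+t_A²))) for t_A ≤ t < 0, (1/2)(erf(λ) − erf(λ/√(1+t_A²))) for 0 ≤ t < −t_A, and (1/2)(erf(λ) − erf(λ/√(1+t²))) for t ≥ −t_A (with λ = L/δ, t = T/δ², t_A = T_A/δ²), is a continuous nondecreasing function of t on [t_A, ∞). -/
lemma erf_intble : ∀ a b : ℝ, IntervalIntegrable (fun z => Real.exp (-z^2)) MeasureTheory.volume a b :=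
  fun a b => (Continuous.intervalIntegrable (by continuity) a b)

lemma erf_continuous : Continuous erf := by
  have := intervalIntegral.continuous_primitive erf_intble 0
  exact continuous_const.mul this

lemma erf_monotone : Monotone erf := by
  intro x y hxy
  unfold erf
  apply mul_le_mul_of_nonneg_left _ (by positivity)
  have h := intervalIntegral.integral_add_adjacent_intervals (erf_intble 0 x) (erf_intble x y)
  rw [← h]
  have : 0 ≤ ∫ z in x..y, Real.exp (-z^2) :=
    intervalIntegral.integral_nonneg hxy (fun u _ => (Real.exp_pos _).le)
  linarith

theorem detection_probability_early_activation (lam tA : ℝ)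
    (hlam : 0 < lam) (htA : tA < 0)
    (P : ℝ → ℝ)
    (hP : ∀ t, P t =
      if t < 0 then
        (1/2) * (erf (lam / Real.sqrt (1 + t^2)) - erf (lam / Real.sqrt (1 + tA^2)))
      else if t < -tA then
        (1/2) * (erf lam - erf (lam / Real.sqrt (1 + tA^2)))
      else
        (1/2) * (erf lam - erf (lam / Real.sqrt (1 + t^2)))) :
    ContinuousOn P (Set.Ici tA) ∧ MonotoneOn P (Set.Ici tA) := by
  set h : ℝ → ℝ := fun u => lam / Real.sqrt (1 + u^2) with hh
  have hsq : ∀ u v : ℝ, u^2 ≤ v^2 → h v ≤ h u := by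
    intro u v huv
    apply div_le_div_of_nonneg_left hlam.le (by positivity)
    exact Real.sqrt_le_sqrt (by linarith)
  set Q : ℝ → ℝ := fun t => (1/2) * (erf (h (min t 0)) - erf (h (max t (-tA)))) with hQ
  have hEq : Set.EqOn P Q (Set.Ici tA) := by
    intro t ht
    rw [hP t]
    by_cases h1 : t < 0
    · rw [if_pos h1]
      have hmin : min t 0 = t := min_eq_left h1.le
      have hmax : max t (-tA) = -tA := max_eq_right (by linarith)
      simp only [hQ, hmin, hmax, hh, neg_sq]
    · rw [if_neg h1]
      push_neg at h1
      have hmin : min t 0 = 0 := min_eq_right h1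
      by_cases h2 : t < -tA
      · rw [if_pos h2]
        have hmax : max t (-tA) = -tA := max_eq_right h2.le
        simp only [hQ, hmin, hmax, hh, neg_sq]
        norm_num
      · rw [if_neg h2]
        push_neg at h2
        have hmax : max t (-tA) = t := max_eq_left h2
        simp only [hQ, hmin, hmax, hh]
        norm_num
  have hQcont : Continuous Q := by
    have hden : ∀ u : ℝ, Real.sqrt (1 + u^2) ≠ 0 := by
      intro u; positivity
    have hc : Continuous h := by
      apply continuous_const.div
      · continuity
      · exact hden
    exact (continuous_const.mul (((erf_continuous.comp
      (hc.comp (continuous_id.min continuous_const))).sub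
      (erf_continuous.comp (hc.comp (continuous_id.max continuous_const))))))
  have hQmono : MonotoneOn Q (Set.Ici tA) := by
    intro s hs t ht hst
    have hA : erf (h (min s 0)) ≤ erf (h (min t 0)) := by
      apply erf_monotone
      apply hsq
      have h1 : min s 0 ≤ min t 0 := min_le_min hst le_rfl
      have h2 : min t 0 ≤ 0 := min_le_right _ _
      nlinarith
    have hB : erf (h (max t (-tA))) ≤ erf (h (max s (-tA))) := by
      apply erf_monotone
      apply hsq
      have h1 : max s (-tA) ≤ max t (-tA) := max_le_max hst le_rfl
      have h2 : (0:ℝ) ≤ max s (-tA) := le_trans (by linarith) (le_max_right _ _)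
      nlinarith
    simp only [hQ]
    linarith
  constructor
  · exact (hQcont.continuousOn).congr hEq
  · exact hQmono.congr hEq.symm
end

section
/- With λ > 0 and t_A < 0 fixed, for all t > 0 one has P_L(t) ≥ P[D_t], with strict inequality whenever t_A < 0 < t, where P_L(t) = erf(λ) − (1/2)(erf(λ/√(1+t_A²)) + erf(λ/√(1+t²))) for t ≥ 0 and P[D_t] is as given by the Bohmian first-crossing prescription: P[D_t] = (1/2)(erf(λ) − erf(λ/√(1+t_A²))) for 0 ≤ t < −t_A and (1/2)(erf(λ) − erf(λ/√(1+t²))) for t ≥ −t_A. -/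
lemma erf_strictMono : StrictMono erf := by
  intro a b hab
  have hc : 0 < 2 / Real.sqrt Real.pi := by positivity
  unfold erf
  have hcont : Continuous fun z : ℝ => Real.exp (-z^2) := by continuity
  have hsplit : (∫ z in (0:ℝ)..a, Real.exp (-z^2)) + (∫ z in a..b, Real.exp (-z^2))
      = ∫ z in (0:ℝ)..b, Real.exp (-z^2) :=
    intervalIntegral.integral_add_adjacent_intervals
      (hcont.intervalIntegrable _ _) (hcont.intervalIntegrable _ _)
  have hpos : 0 < ∫ z in a..b, Real.exp (-z^2) := by
    apply intervalIntegral.intervalIntegral_pos_of_pos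
    · exact hcont.intervalIntegrable _ _
    · intro x; exact Real.exp_pos _
    · exact hab
  nlinarith [hpos, hc, hsplit]

lemma sqrt_gt_one {x : ℝ} (hx : x ≠ 0) : 1 < Real.sqrt (1 + x^2) := by
  have : (1:ℝ) < 1 + x^2 := by nlinarith [sq_pos_of_ne_zero hx]
  calc (1:ℝ) = Real.sqrt 1 := by simp
    _ < Real.sqrt (1 + x^2) := Real.sqrt_lt_sqrt (by norm_num) this

lemma div_lt_self' {lam x : ℝ} (hlam : 0 < lam) (hx : x ≠ 0) :
    lam / Real.sqrt (1 + x^2) < lam := by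
  have h1 := sqrt_gt_one hx
  rw [div_lt_iff₀ (by linarith)]
  nlinarith

theorem leavens_overestimates_detection (lam tA : ℝ)
    (hlam : 0 < lam) (htA : tA < 0)
    (PL PD : ℝ → ℝ)
    (hPL : ∀ t, 0 ≤ t → PL t =
      erf lam - (1/2) * (erf (lam / Real.sqrt (1 + tA^2)) +
        erf (lam / Real.sqrt (1 + t^2))))
    (hPD : ∀ t, 0 ≤ t → PD t =
      if t < -tA then
        (1/2) * (erf lam - erf (lam / Real.sqrt (1 + tA^2)))
      else
        (1/2) * (erf lam - erf (lam / Real.sqrt (1 + t^2)))) :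
    ∀ t : ℝ, 0 < t → PD t ≤ PL t ∧ PD t < PL t := by
  intro t ht
  have hA : erf (lam / Real.sqrt (1 + tA^2)) < erf lam :=
    erf_strictMono (div_lt_self' hlam (ne_of_lt htA))
  have hB : erf (lam / Real.sqrt (1 + t^2)) < erf lam :=
    erf_strictMono (div_lt_self' hlam (ne_of_gt ht))
  rw [hPL t ht.le, hPD t ht.le]
  split_ifs with h
  · constructor <;> nlinarith
  · constructor <;> nlinarith
end

section
/- For a detector at ξ = L > 0 activated at time 0, the set of initial positions ξ₀ at time τ = 0 whose Bohmian orbit meets the detector worldline {ξ = L, 0 ≤ τ ≤ T} is exactly the interval [L/√(1+(T/δ²)²), L]; consequently the detection probability equals ∫ over this interval of the time-0 density (1/(√π δ))exp(−ξ₀²/δ²) dξ₀ = (1/2)(erf(L/δ) − erf(L/(δ√(1+(T/δ²)²)))). -/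
theorem detector_initial_positions_and_probability (δ L T : ℝ)
    (hδ : 0 < δ) (hL : 0 < L) (hT : 0 < T)
    (Δ : ℝ → ℝ) (hΔ : ∀ τ, Δ τ = δ * Real.sqrt (1 + (τ / δ^2)^2)) :
    {ξ₀ : ℝ | ∃ τ ∈ Set.Icc 0 T, ξ₀ * Δ τ / Δ 0 = L} =
      Set.Icc (L / Real.sqrt (1 + (T / δ^2)^2)) L ∧
    ∫ ξ₀ in Set.Icc (L / Real.sqrt (1 + (T / δ^2)^2)) L,
        (1 / (Real.sqrt Real.pi * δ)) * Real.exp (-ξ₀^2 / δ^2) =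
      (1/2) * (erf (L / δ) -
        erf (L / (δ * Real.sqrt (1 + (T / δ^2)^2)))) := by
  have hπ : (0:ℝ) < Real.sqrt Real.pi := Real.sqrt_pos.mpr Real.pi_pos
  set s : ℝ := Real.sqrt (1 + (T / δ^2)^2) with hs_def
  have hs1 : (1:ℝ) ≤ s := by
    rw [hs_def]
    exact Real.le_sqrt_of_sq_le (by nlinarith [sq_nonneg (T / δ^2)])
  have hs0 : (0:ℝ) < s := lt_of_lt_of_le one_pos hs1
  have hΔ0 : Δ 0 = δ := by rw [hΔ]; simp
  have haL : L / s ≤ L := by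
    calc L / s ≤ L / 1 := by gcongr
    _ = L := by ring
  have ha0 : 0 < L / s := by positivity
  constructor
  · ext ξ₀
    simp only [Set.mem_setOf_eq, Set.mem_Icc]
    constructor
    · rintro ⟨τ, ⟨hτ0, hτT⟩, hEq⟩
      rw [hΔ0, hΔ τ] at hEq
      set u : ℝ := Real.sqrt (1 + (τ / δ^2)^2) with hu_def
      have hu1 : (1:ℝ) ≤ u := by
        rw [hu_def]
        exact Real.le_sqrt_of_sq_le (by nlinarith [sq_nonneg (τ / δ^2)])
      have hu0 : (0:ℝ) < u := lt_of_lt_of_le one_pos hu1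
      have huS : u ≤ s := by
        rw [hu_def, hs_def]
        apply Real.sqrt_le_sqrt
        have : τ^2 ≤ T^2 := pow_le_pow_left₀ hτ0 hτT 2
        have : (τ / δ^2)^2 ≤ (T / δ^2)^2 := by
          rw [div_pow, div_pow]; gcongr
        linarith
      have hξ : ξ₀ = L / u := by
        field_simp at hEq
        have h2 : ξ₀ * u * δ = L * δ := by rw [hEq]
        have h3 : ξ₀ * u = L := mul_right_cancel₀ hδ.ne' h2
        field_simp
        linarith
      subst hξ
      constructor
      · gcongr
      · calc L / u ≤ L / 1 := by gcongr
        _ = L := by ring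
    · rintro ⟨h1, h2⟩
      have hξ0 : 0 < ξ₀ := lt_of_lt_of_le ha0 h1
      set g : ℝ → ℝ := fun τ => ξ₀ * Δ τ / Δ 0 with hg_def
      have hΔc : Continuous Δ := by
        have : Δ = fun τ => δ * Real.sqrt (1 + (τ / δ^2)^2) := funext hΔ
        rw [this]
        exact continuous_const.mul (Real.continuous_sqrt.comp
          (continuous_const.add ((continuous_id.div_const _).pow 2)))
      have hgc : ContinuousOn g (Set.Icc 0 T) :=
        ((continuous_const.mul hΔc).div_const _).continuousOn
      have hg0 : g 0 = ξ₀ := by simp [hg_def, hΔ0, hδ.ne']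
      have hgT : g T = ξ₀ * s := by
        simp [hg_def, hΔ0, hΔ T, hs_def]
        field_simp
      have hmem : L ∈ Set.Icc (g 0) (g T) := by
        rw [hg0, hgT]
        constructor
        · exact h2
        · calc L = (L / s) * s := by field_simp
          _ ≤ ξ₀ * s := by gcongr
      obtain ⟨τ, hτ, hgτ⟩ := intermediate_value_Icc hT.le hgc hmem
      exact ⟨τ, hτ, hgτ⟩
  · have hIcc : (∫ ξ₀ in Set.Icc (L / s) L,
        (1 / (Real.sqrt Real.pi * δ)) * Real.exp (-ξ₀^2 / δ^2))
        = ∫ ξ₀ in (L / s)..L, (1 / (Real.sqrt Real.pi * δ)) * Real.exp (-ξ₀^2 / δ^2) := by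
      rw [MeasureTheory.integral_Icc_eq_integral_Ioc, intervalIntegral.integral_of_le haL]
    rw [hIcc]
    have hfun : ∀ ξ : ℝ, (1 / (Real.sqrt Real.pi * δ)) * Real.exp (-ξ^2 / δ^2)
        = (1 / (Real.sqrt Real.pi * δ)) * Real.exp (-(ξ/δ)^2) := by
      intro ξ
      congr 1
      congr 1
      field_simp
    simp only [hfun]
    rw [intervalIntegral.integral_const_mul]
    rw [intervalIntegral.integral_comp_div (fun z => Real.exp (-z^2)) hδ.ne']
    have hint : ∀ a b : ℝ, IntervalIntegrable (fun z => Real.exp (-z^2)) MeasureTheory.volume a b :=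
      fun a b => (Real.continuous_exp.comp (continuous_pow 2).neg).intervalIntegrable a b
    have hsub : (∫ z in (0:ℝ)..(L/δ), Real.exp (-z^2))
        - (∫ z in (0:ℝ)..(L/s/δ), Real.exp (-z^2))
        = ∫ z in (L/s/δ)..(L/δ), Real.exp (-z^2) :=
      intervalIntegral.integral_interval_sub_left (hint 0 (L/δ)) (hint 0 (L/s/δ))
    have harg : L / (δ * s) = L / s / δ := by rw [div_div, mul_comm]
    rw [erf, erf, harg]
    rw [smul_eq_mul]
    rw [← hsub]
    field_simp
end
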